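/- Let X ⊆ A^ℤ be a subshift and X* its star-studded version. For any x₁⁻, x₂⁻ ∈ X⁻: (a) foll_{X*}(x₁⁻) ≠ foll_{X*}(x₂⁻ *); (b) if foll_X(x₁⁻) ≠ foll_X(x₂⁻), then foll_{X*}(x₁⁻) ≠ foll_{X*}(x₂⁻) and foll_{X*}(x₁⁻ *) ≠ foll_{X*}(x₂⁻ *). Consequently, if X is non-sofic then X* is non-sofic. -/

import Mathlib

namespace Paper

variable {A B C : Type*}

def shiftMap (x : ℤ → A) : ℤ → A := fun i => x (i + 1)

def shiftInvMap (x : ℤ → A) : ℤ → A := fun i => x (i - 1)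

/-- A subshift: nonempty, shift-invariant (both directions), and closed
(expressed combinatorially: any configuration all of whose central patterns
are approximated by members is a member). -/
def IsSubshift (X : Set (ℤ → A)) : Prop :=
  X.Nonempty ∧ (∀ x ∈ X, shiftMap x ∈ X) ∧ (∀ x ∈ X, shiftInvMap x ∈ X) ∧
  ∀ x : ℤ → A, (∀ n : ℕ, ∃ y ∈ X, ∀ i : ℤ, |i| ≤ (n : ℤ) → y i = x i) → x ∈ X

/-- The word `x[i, i+k-1]`. -/
def cfgWord (x : ℤ → A) (i : ℤ) (k : ℕ) : List A :=
  List.ofFn (fun t : Fin k => x (i + ((t : ℕ) : ℤ)))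

/-- The language of a set of configurations. -/
def lang (X : Set (ℤ → A)) : Set (List A) := {w | ∃ x ∈ X, ∃ i : ℤ, cfgWord x i w.length = w}

def TransitiveShift (X : Set (ℤ → A)) : Prop :=
  ∀ u ∈ lang X, ∀ v ∈ lang X, ∃ w : List A, u ++ w ++ v ∈ lang X

/-- Left ray of a configuration: `leftRay x n = x (-1-n)`. -/
def leftRay (x : ℤ → A) : ℕ → A := fun n => x (-1 - (n : ℤ))

def rightRay (x : ℤ → A) : ℕ → A := fun n => x (n : ℤ)

def LeftRays (X : Set (ℤ → A)) : Set (ℕ → A) := leftRay '' X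

def RightRays (X : Set (ℤ → A)) : Set (ℕ → A) := rightRay '' X

/-- Glue a left ray and a right ray into a configuration. -/
def glue (l r : ℕ → A) : ℤ → A := fun i => if 0 ≤ i then r i.toNat else l (-1 - i).toNat

/-- Follower set of a left-infinite sequence. -/
def foll (X : Set (ℤ → A)) (l : ℕ → A) : Set (ℕ → A) := {r | glue l r ∈ X}

def wordThen (w : List A) (r : ℕ → A) : ℕ → A :=
  fun n => if h : n < w.length then w.get ⟨n, h⟩ else r (n - w.length)

/-- Follower set of a word. -/
def follW (X : Set (ℤ → A)) (w : List A) : Set (ℕ → A) := {r | wordThen w r ∈ RightRays X}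

def occursInLeft (l : ℕ → A) (w : List A) : Prop :=
  ∃ j : ℕ, ∀ k : Fin w.length, l (j + (w.length - 1 - (k : ℕ))) = w.get k

/-- The language of a left-infinite sequence. -/
def langL (l : ℕ → A) : Set (List A) := {w | occursInLeft l w}

/-- The left ray `l` ends with the word `w`. -/
def raySuffix (l : ℕ → A) (w : List A) : Prop :=
  ∀ k : Fin w.length, l (w.length - 1 - (k : ℕ)) = w.get k

def HalfSyncWord (X : Set (ℤ → A)) (w : List A) : Prop :=
  w ∈ lang X ∧ ∃ l ∈ LeftRays X, raySuffix l w ∧ langL l = lang X ∧ foll X l = follW X w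

def HalfSynchronized (X : Set (ℤ → A)) : Prop := TransitiveShift X ∧ ∃ w, HalfSyncWord X w

def SyncWord (X : Set (ℤ → A)) (w : List A) : Prop :=
  w ∈ lang X ∧ ∀ l ∈ LeftRays X, raySuffix l w → foll X l = follW X w

def Synchronized (X : Set (ℤ → A)) : Prop := TransitiveShift X ∧ ∃ w, SyncWord X w

/-- Product of two subshifts, over the product alphabet. -/
def prodShift (Y : Set (ℤ → B)) (Z : Set (ℤ → C)) : Set (ℤ → B × C) :=
  {x | (fun i => (x i).1) ∈ Y ∧ (fun i => (x i).2) ∈ Z}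

/-- Identification of a pair of sets of right rays with a set of right rays
over the product alphabet. -/
def prodRaySet (S : Set (ℕ → B)) (T : Set (ℕ → C)) : Set (ℕ → B × C) :=
  {r | (fun n => (r n).1) ∈ S ∧ (fun n => (r n).2) ∈ T}

/-- Extend a left ray by one more symbol on the right. -/
def extendRay (l : ℕ → A) (a : A) : ℕ → A := fun n => if n = 0 then a else l (n - 1)

/-- Edge of the Krieger graph from `u` to `v` labeled `a`. -/
def KEdge (X : Set (ℤ → A)) (u : Set (ℕ → A)) (a : A) (v : Set (ℕ → A)) : Prop :=
  ∃ l ∈ LeftRays X, extendRay l a ∈ LeftRays X ∧ u = foll X l ∧ v = foll X (extendRay l a)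

def KStep (X : Set (ℤ → A)) (u v : Set (ℕ → A)) : Prop := ∃ a, KEdge X u a v

/-- Existence of a finite path in the Krieger graph. -/
def KReach (X : Set (ℤ → A)) : Set (ℕ → A) → Set (ℕ → A) → Prop :=
  Relation.ReflTransGen (KStep X)

def KVertex (X : Set (ℤ → A)) (v : Set (ℕ → A)) : Prop := ∃ l ∈ LeftRays X, v = foll X l

/-- A subshift is sofic iff it has finitely many follower sets. -/
def Sofic (X : Set (ℤ → A)) : Prop := {v : Set (ℕ → A) | KVertex X v}.Finite

/-- Vertex of the Fischer graph (w.r.t. half-synchronizing word `w`): a vertex of the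
Krieger graph in the maximal strongly connected subgraph containing `foll w`. -/
def FVertex (X : Set (ℤ → A)) (w : List A) (v : Set (ℕ → A)) : Prop :=
  KVertex X v ∧ KReach X (follW X w) v ∧ KReach X v (follW X w)

/-- Directed (multi)graph with vertex type `V` and edge type `E`. -/
structure DiGraph (V : Type*) (E : Type*) where
  ini : E → V
  ter : E → V

variable {V E V' E' : Type*}

/-- Bi-infinite path on a graph. -/
def BiPath (G : DiGraph V E) (x : ℤ → E) : Prop := ∀ i : ℤ, G.ter (x i) = G.ini (x (i + 1))

/-- `p` is a finite path of `m+1` edges. -/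
def FinPath (G : DiGraph V E) (m : ℕ) (p : Fin (m + 1) → E) : Prop :=
  ∀ k : Fin m, G.ter (p k.castSucc) = G.ini (p k.succ)

/-- The subpath `x[i, i+n]` of a bi-infinite path is a shortest path between its endpoints. -/
def GeodesicSeg (G : DiGraph V E) (x : ℤ → E) (i : ℤ) (n : ℕ) : Prop :=
  ∀ (m : ℕ) (p : Fin (m + 1) → E), FinPath G m p →
    G.ini (p 0) = G.ini (x i) → G.ter (p (Fin.last m)) = G.ter (x (i + (n : ℤ))) → n ≤ m

def EvGeodesic (G : DiGraph V E) (x : ℤ → E) : Prop :=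
  ∃ i₀ : ℤ, ∀ i : ℤ, i₀ ≤ i → ∀ n : ℕ, GeodesicSeg G x i n

/-- Strictly proximal pair of bi-infinite paths. -/
def StrictProxPair (x y : ℤ → E) : Prop :=
  (∀ n : ℕ, ∃ i : ℕ, ∀ k : ℕ, k ≤ n → x ((i : ℤ) + (k : ℤ)) = y ((i : ℤ) + (k : ℤ))) ∧
  ∀ N : ℕ, ∃ i : ℕ, N ≤ i ∧ x ((i : ℕ) : ℤ) ≠ y ((i : ℕ) : ℤ)

def HasEvGeoProxPair (G : DiGraph V E) : Prop :=
  ∃ x y : ℤ → E, BiPath G x ∧ BiPath G y ∧ EvGeodesic G x ∧ EvGeodesic G y ∧ StrictProxPair x y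

/-- Edges of the Fischer graph: Krieger edges between Fischer vertices. -/
def FischerE (X : Set (ℤ → A)) (w : List A) : Type _ :=
  {t : Set (ℕ → A) × A × Set (ℕ → A) //
    FVertex X w t.1 ∧ FVertex X w t.2.2 ∧ KEdge X t.1 t.2.1 t.2.2}

def FischerGraph (X : Set (ℤ → A)) (w : List A) : DiGraph (Set (ℕ → A)) (FischerE X w) :=
  ⟨fun e => e.1.1, fun e => e.1.2.2⟩

def SlidingBlockCode (X : Set (ℤ → A)) (F : (ℤ → A) → (ℤ → B)) : Prop :=
  ∃ (r : ℕ) (f : (Fin (2 * r + 1) → A) → B),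
    ∀ x ∈ X, ∀ i : ℤ, F x i = f (fun k => x (i + ((k : ℕ) : ℤ) - (r : ℤ)))

def ShiftConjugate (X : Set (ℤ → A)) (Y : Set (ℤ → B)) : Prop :=
  ∃ F : (ℤ → A) → (ℤ → B), SlidingBlockCode X F ∧ Set.InjOn F X ∧ F '' X = Y

def DirectPrime (X : Set (ℤ → A)) : Prop :=
  ∀ (B C : Type) (_ : Finite B) (_ : Finite C) (Y : Set (ℤ → B)) (Z : Set (ℤ → C)),
    IsSubshift Y → IsSubshift Z → ShiftConjugate X (prodShift Y Z) →
    (∃ y, Y = {y}) ∨ (∃ z, Z = {z})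

/-- The star-studded version of a subshift: configurations of `X` with `*` (here `none`)
interleaved so that no two consecutive `*` occur. -/
def starShift (X : Set (ℤ → A)) : Set (ℤ → Option A) :=
  {x | (∀ i : ℤ, ¬ (x i = none ∧ x (i + 1) = none)) ∧
       ∀ (i : ℤ) (k : ℕ), (cfgWord x i k).reduceOption ∈ lang X}

def someRay (l : ℕ → A) : ℕ → Option A := fun n => some (l n)

/-! Erasing the stars of a configuration of `X*` gives a configuration of `X`, and conversely a
configuration of `X` lies in `X*` both as it is and with one `*` inserted at the origin. So
`foll_X(l)` is the set of star-free rays in `foll_{X*}(l)`, and also in `foll_{X*}(l *)`; this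
gives (b), and shows that `foll_X` factors through `foll_{X*}`, so that finitely many follower
sets of `X*` leave finitely many for `X`. For (a), if `x⁻.x⁺` is a point of `X` then `*x⁺`
follows `x⁻` in `X*`, but no ray starting with `*` follows a left ray ending with `*`. -/

section StarStudded

variable {X : Set (ℤ → A)} {x : ℤ → A}

lemma cfgWord_length (x : ℤ → A) (i : ℤ) (k : ℕ) : (cfgWord x i k).length = k :=
  List.length_ofFn

lemma cfgWord_mem_lang (hx : x ∈ X) (i : ℤ) (k : ℕ) : cfgWord x i k ∈ lang X :=
  ⟨x, hx, i, by rw [cfgWord_length]⟩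

lemma cfgWord_append (x : ℤ → A) (i : ℤ) (a b : ℕ) :
    cfgWord x i (a + b) = cfgWord x i a ++ cfgWord x (i + a) b := by
  simp only [cfgWord, List.ofFn_add, Fin.val_castLE, Fin.val_natAdd, Nat.cast_add, add_assoc]

lemma cfgWord_eq_map {x : ℤ → A} {y : ℤ → B} {f : A → B} {i j : ℤ} {k : ℕ}
    (h : ∀ m : ℕ, m < k → y (i + m) = f (x (j + m))) :
    cfgWord y i k = (cfgWord x j k).map f := by
  simp only [cfgWord, List.map_ofFn]
  exact congrArg List.ofFn (funext fun t => h t t.isLt)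

lemma apply_eq_of_cfgWord_eq {x y : ℤ → A} {i j : ℤ} {k : ℕ}
    (h : cfgWord x i k = cfgWord y j k) {m : ℕ} (hm : m < k) : x (i + m) = y (j + m) :=
  congrFun (List.ofFn_injective h) ⟨m, hm⟩

lemma reduceOption_map_some (w : List A) : (w.map some).reduceOption = w := by
  induction w with
  | nil => rfl
  | cons a w ih => simp [ih]

lemma IsSubshift.shift_mem (hX : IsSubshift X) (hx : x ∈ X) (m : ℤ) :
    (fun i => x (i + m)) ∈ X := by
  induction m using Int.induction_on with
  | zero => simpa using hx
  | succ n ih =>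
      convert hX.2.1 _ ih using 1
      funext i
      simp only [shiftMap]
      ring_nf
  | pred n ih =>
      convert hX.2.2.1 _ ih using 1
      funext i
      simp only [shiftInvMap]
      ring_nf

lemma IsSubshift.mem_of_cfgWord_mem_lang (hX : IsSubshift X)
    (h : ∀ n : ℕ, cfgWord x (-n) (2 * n + 1) ∈ lang X) : x ∈ X := by
  refine hX.2.2.2 x fun n => ?_
  obtain ⟨y, hy, j, hyx⟩ := h n
  rw [cfgWord_length] at hyx
  refine ⟨fun t => y (t + (j + n)), hX.shift_mem hy _, fun t ht => ?_⟩
  rw [abs_le] at ht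
  have := apply_eq_of_cfgWord_eq hyx (m := (t + n).toNat) (by omega)
  rw [Int.toNat_of_nonneg (by omega)] at this
  simpa [add_comm, add_left_comm] using this

lemma shiftMap_mem_starShift_iff {y : ℤ → Option A} :
    shiftMap y ∈ starShift X ↔ y ∈ starShift X := by
  have hword : ∀ i k, cfgWord (shiftMap y) i k = cfgWord y (i + 1) k := fun i k => by
    simp only [cfgWord, shiftMap, add_right_comm]
  refine ⟨fun ⟨hstar, hlang⟩ => ⟨fun i => ?_, fun i k => ?_⟩,
    fun ⟨hstar, hlang⟩ => ⟨fun i => hstar (i + 1), fun i k => hword i k ▸ hlang (i + 1) k⟩⟩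
  · simpa [shiftMap, sub_add_cancel, sub_add_add_cancel] using hstar (i - 1)
  · simpa [hword] using hlang (i - 1) k

lemma cfgWord_comp_some (x : ℤ → A) (i : ℤ) (k : ℕ) :
    cfgWord (some ∘ x) i k = (cfgWord x i k).map some :=
  cfgWord_eq_map fun _ _ => rfl

lemma comp_some_mem_starShift (hx : x ∈ X) : some ∘ x ∈ starShift X :=
  ⟨by simp, fun i k => by
    rw [cfgWord_comp_some, reduceOption_map_some]
    exact cfgWord_mem_lang hx i k⟩

lemma IsSubshift.mem_of_comp_some_mem_starShift (hX : IsSubshift X)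
    (h : some ∘ x ∈ starShift X) : x ∈ X :=
  hX.mem_of_cfgWord_mem_lang fun n => by
    simpa only [cfgWord_comp_some, reduceOption_map_some] using h.2 (-n) (2 * n + 1)

def insertStar (x : ℤ → A) : ℤ → Option A :=
  fun i => if i < 0 then some (x i) else if i = 0 then none else some (x (i - 1))

lemma insertStar_eq_none_iff {i : ℤ} : insertStar x i = none ↔ i = 0 := by
  unfold insertStar
  split_ifs <;> simp_all
  omega

lemma cfgWord_insertStar_of_le {i : ℤ} {k : ℕ} (h : i + k ≤ 0) :
    cfgWord (insertStar x) i k = (cfgWord x i k).map some :=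
  cfgWord_eq_map fun m hm => if_pos (by omega)

lemma cfgWord_insertStar_of_pos {i : ℤ} {k : ℕ} (h : 0 < i) :
    cfgWord (insertStar x) i k = (cfgWord x (i - 1) k).map some :=
  cfgWord_eq_map fun m _ => by
    rw [insertStar, if_neg (by omega), if_neg (by omega), sub_add_eq_add_sub]

lemma reduceOption_cfgWord_insertStar (x : ℤ → A) (a b : ℕ) :
    (cfgWord (insertStar x) (-a) (a + (1 + b))).reduceOption = cfgWord x (-a) (a + b) := by
  rw [cfgWord_append, cfgWord_append _ (-a + a), neg_add_cancel,
    cfgWord_insertStar_of_le (i := -a) (by simp),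
    cfgWord_insertStar_of_pos (i := 0 + (1 : ℕ)) (by simp), cfgWord_append x, neg_add_cancel,
    show cfgWord (insertStar x) 0 1 = [none] by simp [cfgWord, insertStar]]
  simp [List.reduceOption_append, reduceOption_map_some]

lemma insertStar_mem_starShift (hx : x ∈ X) : insertStar x ∈ starShift X := by
  refine ⟨fun i ⟨h₀, h₁⟩ => ?_, fun i k => ?_⟩
  · rw [insertStar_eq_none_iff] at h₀ h₁
    omega
  rcases le_or_gt (i + k) 0 with hle | hlt
  · rw [cfgWord_insertStar_of_le hle, reduceOption_map_some]
    exact cfgWord_mem_lang hx i k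
  rcases lt_or_ge 0 i with hpos | hnonpos
  · rw [cfgWord_insertStar_of_pos hpos, reduceOption_map_some]
    exact cfgWord_mem_lang hx _ k
  obtain ⟨a, rfl⟩ : ∃ a : ℕ, i = -a := ⟨(-i).toNat, by omega⟩
  obtain ⟨b, rfl⟩ : ∃ b : ℕ, k = a + (1 + b) := ⟨k - a - 1, by omega⟩
  rw [reduceOption_cfgWord_insertStar]
  exact cfgWord_mem_lang hx _ _

lemma IsSubshift.mem_of_insertStar_mem_starShift (hX : IsSubshift X)
    (h : insertStar x ∈ starShift X) : x ∈ X :=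
  hX.mem_of_cfgWord_mem_lang fun n => by
    simpa only [reduceOption_cfgWord_insertStar, two_mul, add_assoc, add_comm 1 n]
      using h.2 (-n) (n + (1 + (n + 1)))

lemma glue_leftRay_rightRay (z : ℤ → A) : glue (leftRay z) (rightRay z) = z := by
  funext i
  unfold glue leftRay rightRay
  split_ifs <;> congr 1 <;> omega

lemma glue_someRay (l r : ℕ → A) : glue (someRay l) (someRay r) = some ∘ glue l r := by
  funext i
  simp only [glue, someRay, Function.comp_apply]
  split_ifs <;> rfl

lemma glue_extendRay_left (l r : ℕ → A) (a : A) :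
    glue (extendRay l a) r = shiftMap (glue l (extendRay r a)) := by
  funext i
  simp only [glue, extendRay, shiftMap]
  split_ifs <;> first | rfl | omega | (congr 1; omega)

lemma glue_someRay_extendRay_none (l r : ℕ → A) :
    glue (someRay l) (extendRay (someRay r) none) = insertStar (glue l r) := by
  funext i
  simp only [glue, extendRay, someRay, insertStar]
  split_ifs <;> first | rfl | omega | (congr 2; omega)

lemma glue_extendRay_none_extendRay_none_notMem (l r : ℕ → Option A) :
    glue (extendRay l none) (extendRay r none) ∉ starShift X :=
  fun h => h.1 (-1) ⟨rfl, rfl⟩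

lemma someRay_mem_foll_starShift_iff (hX : IsSubshift X) {l r : ℕ → A} :
    someRay r ∈ foll (starShift X) (someRay l) ↔ r ∈ foll X l := by
  change glue (someRay l) (someRay r) ∈ starShift X ↔ glue l r ∈ X
  rw [glue_someRay]
  exact ⟨hX.mem_of_comp_some_mem_starShift, comp_some_mem_starShift⟩

lemma someRay_mem_foll_starShift_extendRay_iff (hX : IsSubshift X) {l r : ℕ → A} :
    someRay r ∈ foll (starShift X) (extendRay (someRay l) none) ↔ r ∈ foll X l := by
  change glue (extendRay (someRay l) none) (someRay r) ∈ starShift X ↔ glue l r ∈ X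
  rw [glue_extendRay_left, shiftMap_mem_starShift_iff, glue_someRay_extendRay_none]
  exact ⟨hX.mem_of_insertStar_mem_starShift, insertStar_mem_starShift⟩

lemma foll_eq_preimage_foll_starShift (hX : IsSubshift X) (l : ℕ → A) :
    foll X l = someRay ⁻¹' foll (starShift X) (someRay l) :=
  Set.ext fun _ => (someRay_mem_foll_starShift_iff hX).symm

lemma foll_eq_preimage_foll_starShift_extendRay (hX : IsSubshift X) (l : ℕ → A) :
    foll X l = someRay ⁻¹' foll (starShift X) (extendRay (someRay l) none) :=
  Set.ext fun _ => (someRay_mem_foll_starShift_extendRay_iff hX).symm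

lemma foll_starShift_someRay_ne_foll_extendRay_none {l₁ : ℕ → A} (hl₁ : l₁ ∈ LeftRays X)
    (l₂ : ℕ → Option A) :
    foll (starShift X) (someRay l₁) ≠ foll (starShift X) (extendRay l₂ none) := by
  obtain ⟨z, hz, rfl⟩ := hl₁
  intro h
  have hstar :
      extendRay (someRay (rightRay z)) none ∈ foll (starShift X) (someRay (leftRay z)) := by
    change glue _ _ ∈ starShift X
    rw [glue_someRay_extendRay_none, glue_leftRay_rightRay]
    exact insertStar_mem_starShift hz
  rw [h] at hstar
  exact glue_extendRay_none_extendRay_none_notMem _ _ hstar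

lemma Sofic.of_starShift (hX : IsSubshift X) (h : Sofic (starShift X)) : Sofic X := by
  refine (h.image (someRay ⁻¹' ·)).subset ?_
  rintro _ ⟨_, ⟨z, hz, rfl⟩, rfl⟩
  exact ⟨_, ⟨_, ⟨some ∘ z, comp_some_mem_starShift hz, rfl⟩, rfl⟩,
    (foll_eq_preimage_foll_starShift hX _).symm⟩

end StarStudded

theorem stmt18_general (X : Set (ℤ → A)) (hX : IsSubshift X) :
    (∀ l₁ ∈ LeftRays X, ∀ l₂ ∈ LeftRays X,
      foll (starShift X) (someRay l₁) ≠
        foll (starShift X) (extendRay (someRay l₂) none) ∧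
      (foll X l₁ ≠ foll X l₂ →
        foll (starShift X) (someRay l₁) ≠ foll (starShift X) (someRay l₂) ∧
        foll (starShift X) (extendRay (someRay l₁) none) ≠
          foll (starShift X) (extendRay (someRay l₂) none))) ∧
    (¬ Sofic X → ¬ Sofic (starShift X)) := by
  refine ⟨fun l₁ hl₁ l₂ _ => ⟨foll_starShift_someRay_ne_foll_extendRay_none hl₁ _,
    fun hne => ⟨fun h => hne ?_, fun h => hne ?_⟩⟩, fun hns h => hns (h.of_starShift hX)⟩
  · rw [foll_eq_preimage_foll_starShift hX l₁, foll_eq_preimage_foll_starShift hX l₂, h]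
  · rw [foll_eq_preimage_foll_starShift_extendRay hX l₁,
      foll_eq_preimage_foll_starShift_extendRay hX l₂, h]

theorem stmt18 [Finite A] (X : Set (ℤ → A)) (hX : IsSubshift X) :
    (∀ l₁ ∈ LeftRays X, ∀ l₂ ∈ LeftRays X,
      foll (starShift X) (someRay l₁) ≠
        foll (starShift X) (extendRay (someRay l₂) none) ∧
      (foll X l₁ ≠ foll X l₂ →
        foll (starShift X) (someRay l₁) ≠ foll (starShift X) (someRay l₂) ∧
        foll (starShift X) (extendRay (someRay l₁) none) ≠
          foll (starShift X) (extendRay (someRay l₂) none))) ∧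
    (¬ Sofic X → ¬ Sofic (starShift X)) :=
  stmt18_general X hX

end Paper
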